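/- The HEOL estimator is exact for constant F: if (d/dt)δθ(s) = F + α(s)·δu(s) on [t−T, t] with F constant, then −(6/T³)·∫_0^T [(T − 2σ)·δθ(σ + t − T) + σ(T − σ)·α(σ + t − T)·δu(σ + t − T)] dσ = F. -/

import Mathlib

/-!
The weight `σ (T - σ)` vanishes at both ends of `[0, T]` and has derivative `T - 2σ`, so by
integration by parts `∫₀ᵀ (T - 2σ) θ + σ (T - σ) θ' = 0` for the shifted `θ`. Substituting
`θ' = F + α δu` leaves the estimator integral equal to `-F ∫₀ᵀ σ (T - σ) dσ = -F T³ / 6`.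
-/

open Real intervalIntegral
open MeasureTheory (volume)

theorem integral_self_mul_sub_self (T : ℝ) : ∫ σ in (0:ℝ)..T, σ * (T - σ) = T ^ 3 / 6 := by
  simp only [mul_sub]
  rw [integral_sub (by apply Continuous.intervalIntegrable; fun_prop)
    (by apply Continuous.intervalIntegrable; fun_prop)]
  simp [← sq, integral_pow]
  ring

theorem integral_heolKernel_of_hasDerivAt {T F : ℝ} {θ v : ℝ → ℝ}
    (hθ : ∀ σ ∈ Set.uIcc 0 T, HasDerivAt θ (F + v σ) σ) (hv : IntervalIntegrable v volume 0 T) :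
    ∫ σ in (0:ℝ)..T, ((T - 2 * σ) * θ σ + σ * (T - σ) * v σ) = -(F * T ^ 3 / 6) := by
  have hweight : ∀ σ ∈ Set.uIcc 0 T, HasDerivAt (fun σ : ℝ => σ * (T - σ)) (T - 2 * σ) σ :=
    fun σ _ => ((hasDerivAt_id' σ).mul ((hasDerivAt_id' σ).const_sub T)).congr_deriv (by ring)
  have hweight' : Continuous fun σ : ℝ => T - 2 * σ := by fun_prop
  have hFv : IntervalIntegrable (fun σ => F + v σ) volume 0 T := intervalIntegrable_const.add hv
  have hθcont : ContinuousOn θ (Set.uIcc 0 T) :=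
    fun σ hσ => (hθ σ hσ).continuousAt.continuousWithinAt
  have hint : IntervalIntegrable
      (fun σ => (T - 2 * σ) * θ σ + σ * (T - σ) * (F + v σ)) volume 0 T :=
    (hweight'.continuousOn.mul hθcont).intervalIntegrable.add (hFv.continuousOn_mul (by fun_prop))
  have hparts := integral_deriv_mul_eq_sub hweight hθ (hweight'.intervalIntegrable _ _) hFv
  calc ∫ σ in (0:ℝ)..T, ((T - 2 * σ) * θ σ + σ * (T - σ) * v σ)
      = ∫ σ in (0:ℝ)..T,
          ((T - 2 * σ) * θ σ + σ * (T - σ) * (F + v σ) - F * (σ * (T - σ))) := by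
        congr 1; ext σ; ring
    _ = -(F * T ^ 3 / 6) := by
        rw [integral_sub hint (by apply Continuous.intervalIntegrable; fun_prop), hparts,
          integral_const_mul, integral_self_mul_sub_self]
        ring

theorem heol_estimator_exact_for_constant_F
    (T t F : ℝ) (hT : 0 < T)
    (δθ w : ℝ → ℝ) (hw : Continuous w)
    (hδθ : ∀ s ∈ Set.Icc (t - T) t, HasDerivAt δθ (F + w s) s) :
    -(6 / T ^ 3) * ∫ σ in (0:ℝ)..T,
        ((T - 2 * σ) * δθ (σ + t - T) + σ * (T - σ) * w (σ + t - T)) = F := by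
  have hshift : ∀ σ ∈ Set.uIcc 0 T,
      HasDerivAt (fun σ => δθ (σ + (t - T))) (F + w (σ + (t - T))) σ := by
    intro σ hσ
    rw [Set.uIcc_of_le hT.le] at hσ
    exact (hδθ _ ⟨by linarith [hσ.1], by linarith [hσ.2]⟩).comp_add_const σ (t - T)
  simp_rw [add_sub_assoc]
  rw [integral_heolKernel_of_hasDerivAt hshift
    ((hw.comp (continuous_add_const _)).intervalIntegrable _ _)]
  field_simp
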